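/- Let X be a Tychonoff (completely regular Hausdorff) space and let Y be a metrizable space that contains an arc (a subspace homeomorphic to the closed unit interval [0,1]). The following are equivalent for C(X,Y) equipped with the graph topology τ_Γ: (1) (C(X,Y), τ_Γ) is metrizable; (2) (C(X,Y), τ_Γ) is first countable; (3) (C(X,Y), τ_Γ) is a Fréchet–Urysohn space; (4) (C(X,Y), τ_Γ) has countable tightness; (5) X is countably compact. -/

import Mathlib

/-!
If `X` is countably compact, a tube lemma shows that every open `G ⊇ graph f` contains a uniform
`ε`-neighbourhood of `graph f`; hence `τ_Γ` is the topology of uniform convergence, which is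
metrizable together with `Y`.

If `X` is not countably compact, it carries a sequence `xₙ` whose singletons form a locally
finite family. Let `A` be the set of maps `g ∘ H`, where `g` is the arc and `H : X → [0,1]` is
positive at every `xₙ`. A series of bumps at the `xₙ` with rapidly decreasing heights squeezes
some `g ∘ H ∈ A` into any neighbourhood of the constant map `g 0`, so `g 0 ∈ closure A`. But
countably many `g ∘ Hₖ ∈ A` all meet the closed set `⋃ₙ {xₙ} × g [δₙ, 1]`, where
`0 < δₙ ≤ Hₖ xₙ` for `k ≤ n`, while the graph of `g 0` avoids it, so no countable subset of `A`
has `g 0` in its closure.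
-/

open TopologicalSpace Set

/-- The graph of a continuous map, as a subset of `X × Y`. -/
def graphSet {X Y : Type*} [TopologicalSpace X] [TopologicalSpace Y] (f : C(X, Y)) :
    Set (X × Y) := {p | p.2 = f p.1}

/-- The graph topology `τ_Γ` on `C(X, Y)`, generated by the sets
`F_G = {f | graph f ⊆ G}` for `G` open in `X × Y`. -/
def graphTopology (X Y : Type*) [TopologicalSpace X] [TopologicalSpace Y] :
    TopologicalSpace C(X, Y) :=
  generateFrom {S | ∃ G : Set (X × Y), IsOpen G ∧ S = {f : C(X, Y) | graphSet f ⊆ G}}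

/-- A topological space is countably compact if every countable open cover has a
finite subcover. -/
def CountablyCompact (X : Type*) [TopologicalSpace X] : Prop :=
  ∀ U : ℕ → Set X, (∀ n, IsOpen (U n)) → (⋃ n, U n) = Set.univ →
    ∃ t : Finset ℕ, (⋃ n ∈ t, U n) = Set.univ

/-- A topological space has countable tightness if every point in the closure of a
set `A` lies in the closure of a countable subset of `A`. -/
def CountableTightness (Z : Type*) [TopologicalSpace Z] : Prop :=
  ∀ (A : Set Z) (z : Z), z ∈ closure A → ∃ B ⊆ A, B.Countable ∧ z ∈ closure B

open Filter Topology Function Uniformity unitInterval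
open scoped UniformConvergence

section GraphTopology

variable {X Y : Type*} [TopologicalSpace X] [TopologicalSpace Y]

theorem graphSet_subset_iff {f : C(X, Y)} {G : Set (X × Y)} :
    graphSet f ⊆ G ↔ ∀ x, (x, f x) ∈ G :=
  ⟨fun h x => h rfl, by rintro h ⟨x, y⟩ (rfl : y = f x); exact h x⟩

theorem isOpen_setOf_graphSet_subset {G : Set (X × Y)} (hG : IsOpen G) :
    IsOpen[graphTopology X Y] {f : C(X, Y) | graphSet f ⊆ G} :=
  isOpen_generateFrom_of_mem ⟨G, hG, rfl⟩

theorem isTopologicalBasis_graphTopology :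
    @IsTopologicalBasis C(X, Y) (graphTopology X Y)
      {S | ∃ G : Set (X × Y), IsOpen G ∧ S = {f : C(X, Y) | graphSet f ⊆ G}} := by
  refine @isTopologicalBasis_of_subbasis_of_finiteInter _ (graphTopology X Y) _ rfl ⟨?_, ?_⟩
  · exact ⟨univ, isOpen_univ, by simp⟩
  · rintro _ ⟨G, hG, rfl⟩ _ ⟨G', hG', rfl⟩
    exact ⟨G ∩ G', hG.inter hG', by ext; simp⟩

end GraphTopology

section CountablyCompact

variable {X : Type*} [TopologicalSpace X]

theorem countablyCompact_iff_countablyCompactSpace :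
    CountablyCompact X ↔ CountablyCompactSpace X := by
  rw [← isCountablyCompact_univ_iff, isCountablyCompact_iff_countable_open_cover]
  simp only [CountablyCompact, univ_subset_iff]

theorem exists_locallyFinite_singleton_of_not_countablyCompactSpace
    (h : ¬ CountablyCompactSpace X) : ∃ x : ℕ → X, LocallyFinite fun n => ({x n} : Set X) := by
  simp only [← isCountablyCompact_univ_iff, isCountablyCompact_iff_seq_clusterPt, mem_univ,
    true_and, not_forall, not_exists] at h
  obtain ⟨x, -, hx⟩ := h
  refine ⟨x, fun a => ?_⟩
  obtain ⟨s, hs, hxs⟩ : ∃ s ∈ 𝓝 a, ¬ ∃ᶠ n in atTop, x n ∈ s := by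
    simpa [mapClusterPt_iff_frequently] using hx a
  exact ⟨s, hs, by simpa [Nat.frequently_atTop_iff_infinite] using hxs⟩

end CountablyCompact

section UniformConvergence

abbrev uniformConvergenceTopology (X Y : Type*) [TopologicalSpace X] [UniformSpace Y] :
    TopologicalSpace C(X, Y) :=
  .induced (fun f => UniformFun.ofFun f) inferInstance

variable {X Y : Type*} [TopologicalSpace X]

theorem hasBasis_nhds_uniformConvergenceTopology [UniformSpace Y] (f : C(X, Y)) {ι : Type*}
    {p : ι → Prop} {s : ι → Set (Y × Y)} (h : (𝓤 Y).HasBasis p s) :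
    (@nhds _ (uniformConvergenceTopology X Y) f).HasBasis p
      fun i => {g | ∀ x, (f x, g x) ∈ s i} := by
  rw [nhds_induced]
  exact (UniformFun.hasBasis_nhds_of_basis X Y (UniformFun.ofFun f) h).comap
    fun g : C(X, Y) => UniformFun.ofFun g

theorem graphTopology_le_uniformConvergenceTopology [UniformSpace Y] :
    graphTopology X Y ≤ uniformConvergenceTopology X Y := by
  refine le_of_nhds_le_nhds fun f => ?_
  rw [(hasBasis_nhds_uniformConvergenceTopology f uniformity_hasBasis_open).ge_iff]
  rintro V ⟨hVu, hV⟩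
  have hG : IsOpen {p : X × Y | (f p.1, p.2) ∈ V} :=
    hV.preimage ((f.continuous.comp continuous_fst).prodMk continuous_snd)
  refine Filter.mem_of_superset (@IsOpen.mem_nhds _ (graphTopology X Y) _ _
    (isOpen_setOf_graphSet_subset hG) ?_) fun g hg x => graphSet_subset_iff.1 hg x
  exact graphSet_subset_iff.2 fun x => refl_mem_uniformity hVu

theorem exists_pos_forall_dist_lt_mem_of_graphSet_subset [PseudoMetricSpace Y]
    [CountablyCompactSpace X] (f : C(X, Y)) {G : Set (X × Y)} (hG : IsOpen G)
    (hfG : graphSet f ⊆ G) : ∃ ε > 0, ∀ x y, dist (f x) y < ε → (x, y) ∈ G := by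
  set U : ℕ → Set X := fun n => interior {x | ∀ y, dist (f x) y < 1 / (n + 1) → (x, y) ∈ G}
  have hU : Monotone U := fun m n hmn => interior_mono fun x hx y hy =>
    hx y (hy.trans_le (Nat.one_div_le_one_div hmn))
  have hcover : univ ⊆ ⋃ n, U n := by
    intro x₀ _
    obtain ⟨u, hu, v, hv, huv⟩ :=
      mem_nhds_prod_iff.1 (hG.mem_nhds (graphSet_subset_iff.1 hfG x₀))
    obtain ⟨r, hr, hrv⟩ := Metric.mem_nhds_iff.1 hv
    obtain ⟨n, hn⟩ := exists_nat_one_div_lt (half_pos hr)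
    refine mem_iUnion.2 ⟨n, mem_interior_iff_mem_nhds.2 ?_⟩
    filter_upwards [hu, f.continuous.continuousAt (Metric.ball_mem_nhds _ (half_pos hr))]
      with x hxu hxr y hy
    refine huv ⟨hxu, hrv ?_⟩
    calc dist y (f x₀) ≤ dist (f x) y + dist (f x) (f x₀) := dist_triangle_left _ _ _
      _ < r / 2 + r / 2 := add_lt_add (hy.trans hn) hxr
      _ = r := add_halves r
  obtain ⟨n, hn⟩ := CountablyCompactSpace.isCountablyCompact_univ.elim_directed_cover U
    (fun _ => isOpen_interior) hcover hU.directed_le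
  exact ⟨1 / (n + 1), Nat.one_div_pos_of_nat, fun x y => interior_subset (hn trivial) y⟩

theorem uniformConvergenceTopology_le_graphTopology [PseudoMetricSpace Y]
    [CountablyCompactSpace X] : uniformConvergenceTopology X Y ≤ graphTopology X Y := by
  refine le_generateFrom ?_
  rintro _ ⟨G, hG, rfl⟩
  refine (@isOpen_iff_mem_nhds _ (uniformConvergenceTopology X Y) _).2 fun f hf => ?_
  obtain ⟨ε, hε, hεG⟩ := exists_pos_forall_dist_lt_mem_of_graphSet_subset f hG hf
  rw [(hasBasis_nhds_uniformConvergenceTopology f Metric.uniformity_basis_dist).mem_iff]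
  exact ⟨ε, hε, fun g hg => graphSet_subset_iff.2 fun x => hεG x (g x) (hg x)⟩

theorem graphTopology_eq_uniformConvergenceTopology [PseudoMetricSpace Y]
    [CountablyCompactSpace X] : graphTopology X Y = uniformConvergenceTopology X Y :=
  le_antisymm graphTopology_le_uniformConvergenceTopology
    uniformConvergenceTopology_le_graphTopology

theorem metrizableSpace_graphTopology [MetricSpace Y] [CountablyCompactSpace X] :
    @MetrizableSpace C(X, Y) (graphTopology X Y) := by
  have : IsCountablyGenerated (𝓤 (X →ᵤ Y)) := (UniformFun.hasBasis_uniformity_of_basis X Y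
    Metric.uniformity_basis_dist_inv_nat_succ).isCountablyGenerated
  have := UniformSpace.metrizableSpace (X := X →ᵤ Y)
  rw [graphTopology_eq_uniformConvergenceTopology]
  let _ : TopologicalSpace C(X, Y) := uniformConvergenceTopology X Y
  exact IsEmbedding.metrizableSpace
    ⟨⟨rfl⟩, UniformFun.ofFun.injective.comp DFunLike.coe_injective⟩

end UniformConvergence

section Tightness

theorem exists_pos_le_of_pos (a : ℕ → ℕ → ℝ) (ha : ∀ k n, 0 < a k n) :
    ∃ δ : ℕ → ℝ, (∀ n, 0 < δ n) ∧ ∀ k n, k ≤ n → δ n ≤ a k n :=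
  ⟨fun n => (Finset.range (n + 1)).inf' Finset.nonempty_range_add_one (a · n),
    fun n => (Finset.lt_inf'_iff _).2 fun k _ => ha k n,
    fun _ _ hkn => Finset.inf'_le _ (Finset.mem_range_succ_iff.2 hkn)⟩

theorem abs_tsum_lt_of_le_geometric {a : ℕ → ℝ} {c : ℝ} (hc : 0 < c) (ha₀ : ∀ n, 0 ≤ a n)
    (ha : ∀ n, a n ≤ c / 2 / 2 / 2 ^ n) : |∑' n, a n| < c := by
  rw [abs_of_nonneg (tsum_nonneg ha₀)]
  calc ∑' n, a n ≤ ∑' n, c / 2 / 2 / 2 ^ n :=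
        ((summable_geometric_two' _).of_nonneg_of_le ha₀ ha).tsum_le_tsum ha
          (summable_geometric_two' _)
    _ = c / 2 := tsum_geometric_two' _
    _ < c := half_lt_self hc

variable {X : Type*} [TopologicalSpace X]

theorem exists_continuous_pos_and_small [CompletelyRegularSpace X] {x : ℕ → X}
    {W : ℕ → Set X} (hW : ∀ n, IsOpen (W n)) (hxW : ∀ n, x n ∈ W n) {ε : ℕ → ℝ}
    (hε : ∀ n, 0 < ε n) :
    ∃ h : C(X, ℝ), (∀ n, 0 < h (x n)) ∧ ∀ z, h z = 0 ∨ ∃ n, z ∈ W n ∧ |h z| < ε n := by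
  classical
  choose f hfc hfx hfW using fun n =>
    CompletelyRegularSpace.completely_regular_isOpen _ _ (hW n) (hxW n)
  obtain ⟨δ, hδ, hδε⟩ := exists_pos_le_of_pos (fun k _ => ε k) (fun k _ => hε k)
  set term : ℕ → X → ℝ := fun n z => δ n / 2 / 2 / 2 ^ n * (1 - f n z)
  have hterm_nonneg : ∀ n z, 0 ≤ term n z := fun n z =>
    mul_nonneg (by have := hδ n; positivity) (sub_nonneg.2 (f n z).2.2)
  have hterm_le : ∀ n z, term n z ≤ δ n / 2 / 2 / 2 ^ n := fun n z =>
    mul_le_of_le_one_right (by have := hδ n; positivity) (sub_le_self _ (f n z).2.1)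
  have hterm_zero : ∀ n z, z ∉ W n → term n z = 0 := fun n z hz => by
    simp [term, hfW n hz]
  have hbound : ∀ n z, term n z ≤ ε 0 / 2 / 2 / 2 ^ n := fun n z =>
    (hterm_le n z).trans (by gcongr; exact hδε 0 n n.zero_le)
  have hsum : ∀ z, Summable (term · z) := fun z =>
    (summable_geometric_two' (ε 0 / 2)).of_nonneg_of_le (hterm_nonneg · z) (hbound · z)
  refine ⟨⟨fun z => ∑' n, term n z, continuous_tsum (fun n => ?_)
    (summable_geometric_two' (ε 0 / 2)) fun n z => ?_⟩, fun n => ?_, fun z => ?_⟩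
  · exact continuous_const.mul (continuous_const.sub (continuous_subtype_val.comp (hfc n)))
  · rw [Real.norm_of_nonneg (hterm_nonneg n z)]; exact hbound n z
  · calc (0 : ℝ) < term n (x n) := by simp [term, hfx n, hδ n]
      _ ≤ ∑' m, term m (x n) := (hsum (x n)).le_tsum n fun m _ => hterm_nonneg m (x n)
  by_cases hz : ∃ n, z ∈ W n
  · -- terms before the first `W n` containing `z` vanish; the later ones are small by `hδε`
    refine .inr ⟨Nat.find hz, Nat.find_spec hz,
      abs_tsum_lt_of_le_geometric (hε _) (hterm_nonneg · z) fun n => ?_⟩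
    rcases lt_or_ge n (Nat.find hz) with hn | hn
    · rw [hterm_zero n z (Nat.find_min hz hn)]; have := hε (Nat.find hz); positivity
    · exact (hterm_le n z).trans (by gcongr; exact hδε _ n hn)
  · simp only [not_exists] at hz
    exact .inl (by simp [hterm_zero _ z (hz _)])

theorem exists_continuous_pos_graph_mem [CompletelyRegularSpace X] (x : ℕ → X)
    {G : Set (X × ℝ)} (hG : IsOpen G) (hG0 : ∀ z, (z, (0 : ℝ)) ∈ G) :
    ∃ h : C(X, ℝ), (∀ n, 0 < h (x n)) ∧ ∀ z, (z, h z) ∈ G := by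
  have hloc : ∀ n, ∃ ε > 0, ∃ W, IsOpen W ∧ x n ∈ W ∧ W ×ˢ Metric.ball (0 : ℝ) ε ⊆ G := by
    intro n
    obtain ⟨W, V, hW, hV, hxW, h0V, hWV⟩ := isOpen_prod_iff.1 hG _ _ (hG0 (x n))
    obtain ⟨ε, hε, hεV⟩ := Metric.isOpen_iff.1 hV 0 h0V
    exact ⟨ε, hε, W, hW, hxW, (prod_mono_right hεV).trans hWV⟩
  choose ε hε W hW hxW hWG using hloc
  obtain ⟨h, hpos, hsmall⟩ := exists_continuous_pos_and_small hW hxW hε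
  refine ⟨h, hpos, fun z => ?_⟩
  rcases hsmall z with h0 | ⟨n, hzW, hzε⟩
  · exact h0 ▸ hG0 z
  · exact hWG n ⟨hzW, by rwa [Metric.mem_ball, Real.dist_0_eq_abs]⟩

variable {Y : Type*} [TopologicalSpace Y]

def arcMapsPositiveAlong (g : C(I, Y)) (x : ℕ → X) : Set C(X, Y) :=
  {f | ∃ H : C(X, I), (∀ n, 0 < (H (x n) : ℝ)) ∧ g.comp H = f}

theorem const_mem_closure_arcMapsPositiveAlong [CompletelyRegularSpace X] (g : C(I, Y))
    (x : ℕ → X) :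
    ContinuousMap.const X (g 0) ∈ closure[graphTopology X Y] (arcMapsPositiveAlong g x) := by
  refine (@IsTopologicalBasis.mem_closure_iff _ (graphTopology X Y) _
    isTopologicalBasis_graphTopology _ _).2 ?_
  rintro _ ⟨G, hG, rfl⟩ hG0
  let G' : Set (X × ℝ) := {p | (p.1, g (projIcc 0 1 zero_le_one p.2)) ∈ G}
  have hG' : IsOpen G' := hG.preimage
    (continuous_fst.prodMk (g.continuous.comp (continuous_projIcc.comp continuous_snd)))
  obtain ⟨h, hpos, hmem⟩ := exists_continuous_pos_graph_mem x hG' fun z => by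
    simpa [G'] using graphSet_subset_iff.1 hG0 z
  let H : C(X, I) := ⟨projIcc 0 1 zero_le_one ∘ h, continuous_projIcc.comp h.continuous⟩
  refine ⟨g.comp H, graphSet_subset_iff.2 hmem, H, fun n => ?_, rfl⟩
  simp [H, coe_projIcc, hpos n]

theorem const_notMem_closure_of_countable [T2Space Y] {g : C(I, Y)} (hg : Injective g)
    {x : ℕ → X} (hx : LocallyFinite fun n => ({x n} : Set X)) {B : Set C(X, Y)}
    (hBA : B ⊆ arcMapsPositiveAlong g x) (hB : B.Countable) :
    ContinuousMap.const X (g 0) ∉ closure[graphTopology X Y] B := by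
  rcases B.eq_empty_or_nonempty with rfl | hBne
  · simp
  obtain ⟨b, rfl⟩ := hB.exists_eq_range hBne
  choose H hHpos hHb using fun k => hBA (mem_range_self k)
  obtain ⟨δ, hδ, hδH⟩ := exists_pos_le_of_pos (fun k n => (H k (x n) : ℝ)) fun k n => hHpos k n
  let S : Set (X × Y) := ⋃ n, closure {x n} ×ˢ (g '' {t | δ n ≤ t})
  have hS : IsClosed S := (hx.closure.prod_right _).isClosed_iUnion fun n =>
    isClosed_closure.prod
      ((isClosed_le continuous_const continuous_subtype_val).isCompact.image g.continuous).isClosed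
  have hf0 : graphSet (ContinuousMap.const X (g 0)) ⊆ Sᶜ := graphSet_subset_iff.2 fun z hz => by
    obtain ⟨n, -, t, ht, hgt⟩ := mem_iUnion.1 hz
    exact (hδ n).not_ge (by simpa [hg hgt] using ht)
  intro hcl
  obtain ⟨_, hfS, k, rfl⟩ := (@mem_closure_iff _ (graphTopology X Y) _ _).1 hcl _
    (isOpen_setOf_graphSet_subset hS.isOpen_compl) hf0
  exact graphSet_subset_iff.1 hfS (x k) (mem_iUnion.2
    ⟨k, subset_closure rfl, H k (x k), hδH k k le_rfl, by rw [← hHb k]; rfl⟩)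

theorem not_countableTightness_graphTopology [CompletelyRegularSpace X] [T2Space Y]
    {g : C(I, Y)} (hg : Injective g) {x : ℕ → X}
    (hx : LocallyFinite fun n => ({x n} : Set X)) :
    ¬ @CountableTightness C(X, Y) (graphTopology X Y) := fun h =>
  let ⟨_, hBA, hB, hcl⟩ := h _ _ (const_mem_closure_arcMapsPositiveAlong g x)
  const_notMem_closure_of_countable hg hx hBA hB hcl

end Tightness

theorem FrechetUrysohnSpace.countableTightness (Z : Type*) [TopologicalSpace Z]
    [FrechetUrysohnSpace Z] : CountableTightness Z := fun _ _ hz =>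
  let ⟨u, hu, hlim⟩ := mem_closure_iff_seq_limit.1 hz
  ⟨range u, range_subset_iff.2 hu, countable_range u,
    mem_closure_of_tendsto hlim (.of_forall mem_range_self)⟩

/-- for `X` Tychonoff and `Y` metrizable containing an arc (a
subspace homeomorphic to `[0,1]`), the following are equivalent for
`(C(X,Y), τ_Γ)`: metrizable; first countable; Fréchet–Urysohn; countable
tightness; `X` countably compact. -/
theorem tfae_graphTopology_metrizable_of_arc (X Y : Type*) [TopologicalSpace X]
    [T35Space X] [TopologicalSpace Y] [MetrizableSpace Y]
    (harc : ∃ g : ↥(Set.Icc (0 : ℝ) 1) → Y, Topology.IsEmbedding g) :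
    List.TFAE
      [ @MetrizableSpace C(X, Y) (graphTopology X Y),
        @FirstCountableTopology C(X, Y) (graphTopology X Y),
        @FrechetUrysohnSpace C(X, Y) (graphTopology X Y),
        @CountableTightness C(X, Y) (graphTopology X Y),
        CountablyCompact X ] := by
  let _ : TopologicalSpace C(X, Y) := graphTopology X Y
  tfae_have 1 → 2 := fun _ => inferInstance
  tfae_have 2 → 3 := fun _ => inferInstance
  tfae_have 3 → 4 := fun _ => FrechetUrysohnSpace.countableTightness _
  tfae_have 4 → 5 := by
    obtain ⟨g, hg⟩ := harc
    refine fun h => countablyCompact_iff_countablyCompactSpace.2 (by_contra fun hX => ?_)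
    obtain ⟨x, hx⟩ := exists_locallyFinite_singleton_of_not_countablyCompactSpace hX
    exact not_countableTightness_graphTopology (g := ⟨g, hg.continuous⟩) hg.injective hx h
  tfae_have 5 → 1 := fun h => by
    have := countablyCompact_iff_countablyCompactSpace.1 h
    let _ := metrizableSpaceMetric Y
    exact metrizableSpace_graphTopology
  tfae_finish
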